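/- Assume 𝒴 is finite. Let H be an information state and M = μ(H,ζ) with ζ independent of Y conditionally on H, and suppose the expected log scores E[s_log(π_H,Y)] and E[s_log(π_M,Y)] are finite. Then the log-loss communication gap equals an expected Kullback–Leibler divergence: V(M; s_log) − V(H; s_log) = E[KL(π_H ‖ π_M)]. -/

import Mathlib

open MeasureTheory ProbabilityTheory ENNReal

/-- The universal completion of a measurable space `m` on `α`: a set is measurable iff it is
null-measurable with respect to every finite measure on `(α, m)`. -/
def MeasurableSpace.univCompletion {α : Type*} (m : MeasurableSpace α) :
    MeasurableSpace α where
  MeasurableSet' s :=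
    ∀ (μ : @MeasureTheory.Measure α m), MeasureTheory.IsFiniteMeasure μ →
      @MeasureTheory.NullMeasurableSet α m s μ
  measurableSet_empty := fun μ _ => (@MeasurableSet.empty α m).nullMeasurableSet
  measurableSet_compl := fun _ hs μ hμ => (hs μ hμ).compl
  measurableSet_iUnion := fun _ hf μ hμ =>
    MeasureTheory.NullMeasurableSet.iUnion fun i => hf i μ hμ

/-- The posterior of `Y` given the information state `H`, as a (version of the) vector of
conditional probabilities `π_H(y) = P(Y = y | H)`. -/
noncomputable def posterior {Ω ℋ 𝒴 : Type*} [MeasurableSpace Ω]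
    (mℋ : MeasurableSpace ℋ) (P : Measure Ω) (H : Ω → ℋ) (Y : Ω → 𝒴) : Ω → 𝒴 → ℝ :=
  fun ω y => (P[(Y ⁻¹' {y}).indicator (fun _ => (1 : ℝ)) | MeasurableSpace.comap H mℋ]) ω

/-- Bayes risk of the reporting problem with scoring rule `s` (action space: the probability
simplex `Δ(𝒴)`, represented as `stdSimplex ℝ 𝒴`): the infimum of the expected score over all
simplex-valued reports that are measurable with respect to the universal completion of the
σ-algebra on the value space of `H`. -/
noncomputable def ReportRisk {Ω ℋ 𝒴 : Type*} [Fintype 𝒴] [MeasurableSpace Ω]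
    (mℋ : MeasurableSpace ℋ) (P : Measure Ω) (H : Ω → ℋ) (Y : Ω → 𝒴)
    (s : (𝒴 → ℝ) → 𝒴 → ℝ≥0∞) : ℝ≥0∞ :=
  ⨅ q : {q : ℋ → 𝒴 → ℝ //
      Measurable[mℋ.univCompletion] q ∧ ∀ h, q h ∈ stdSimplex ℝ 𝒴},
    ∫⁻ ω, s (q.1 (H ω)) (Y ω) ∂P

/-- A scoring rule is proper if reporting the true distribution minimizes the expected score. -/
def ProperScore {𝒴 : Type*} [Fintype 𝒴] (s : (𝒴 → ℝ) → 𝒴 → ℝ≥0∞) : Prop :=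
  ∀ p ∈ stdSimplex ℝ 𝒴, ∀ q ∈ stdSimplex ℝ 𝒴,
    ∑ y, ENNReal.ofReal (p y) * s p y ≤ ∑ y, ENNReal.ofReal (p y) * s q y

/-- A scoring rule is strictly proper if it is proper and the expected score is minimized
only by the true distribution. -/
def StrictlyProperScore {𝒴 : Type*} [Fintype 𝒴] (s : (𝒴 → ℝ) → 𝒴 → ℝ≥0∞) : Prop :=
  ProperScore s ∧ ∀ p ∈ stdSimplex ℝ 𝒴, ∀ q ∈ stdSimplex ℝ 𝒴,
    (∑ y, ENNReal.ofReal (p y) * s p y = ∑ y, ENNReal.ofReal (p y) * s q y) → p = q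

/-- The pointwise divergence `D_s(p, q) = Σ_y p(y) (s(q, y) − s(p, y))` of a scoring rule,
as a (truncated) difference of the two expected scores. -/
noncomputable def scoreDiv {𝒴 : Type*} [Fintype 𝒴] (s : (𝒴 → ℝ) → 𝒴 → ℝ≥0∞)
    (p q : 𝒴 → ℝ) : ℝ≥0∞ :=
  (∑ y, ENNReal.ofReal (p y) * s q y) - (∑ y, ENNReal.ofReal (p y) * s p y)

open Classical in
/-- The logarithmic scoring rule `s_log(q, y) = −log q(y)`, interpreted as `+∞` when
`q(y) = 0`. -/
noncomputable def slog {𝒴 : Type*} : (𝒴 → ℝ) → 𝒴 → ℝ≥0∞ :=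
  fun q y => if q y = 0 then ⊤ else ENNReal.ofReal (-Real.log (q y))

open Classical in
/-- The Kullback–Leibler divergence `KL(p ‖ q) = Σ_y p(y) log (p(y) / q(y))` on a finite set,
interpreted as `+∞` when `p(y) > 0 = q(y)` for some `y`. -/
noncomputable def KLdiv {𝒴 : Type*} [Fintype 𝒴] (p q : 𝒴 → ℝ) : ℝ≥0∞ :=
  if ∃ y, p y ≠ 0 ∧ q y = 0 then ⊤
  else ENNReal.ofReal (∑ y, p y * Real.log (p y / q y))

/-!
For the log score the posterior is a Bayes act, by Gibbs' inequality applied pointwise, so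
`V(X; s_log) = E[s_log(π_X, Y)]` for every information state `X`. Conditional independence of
`ζ` and `Y` given `H` makes `π_H` a conditional law of `Y` given `(H, ζ)` as well, and `π_M` is
`(H, ζ)`-measurable; conditioning on `(H, ζ)` thus gives
`E[s_log(π_M, Y)] = E[Σ_y π_H(y) s_log(π_M, y)]`. Gibbs' identity
`Σ_y p(y) s_log(q, y) = KL(p ‖ q) + Σ_y p(y) s_log(p, y)` splits this as
`E[KL(π_H ‖ π_M)] + V(H; s_log)`, and finiteness of `V(H; s_log)` makes the truncated
subtraction in `ℝ≥0∞` exact.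
-/

section Gibbs

variable {𝒴 : Type*} [Fintype 𝒴] {p q : 𝒴 → ℝ}

lemma sub_le_mul_log_div {a b : ℝ} (ha : 0 ≤ a) (hb : 0 < b) : a - b ≤ a * Real.log (a / b) := by
  have h := InformationTheory.klFun_nonneg (div_nonneg ha hb.le)
  rw [InformationTheory.klFun, div_mul_eq_mul_div] at h
  have := mul_nonneg hb.le h
  field_simp at this
  linarith

lemma neg_log_nonneg_of_mem_stdSimplex (hq : q ∈ stdSimplex ℝ 𝒴) (y : 𝒴) :
    0 ≤ -Real.log (q y) :=
  neg_nonneg.2 (Real.log_nonpos (hq.1 y) (mem_Icc_of_mem_stdSimplex hq y).2)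

lemma sum_mul_log_div_nonneg (hp : p ∈ stdSimplex ℝ 𝒴) (hq : q ∈ stdSimplex ℝ 𝒴)
    (hpq : ∀ y, p y ≠ 0 → q y ≠ 0) : 0 ≤ ∑ y, p y * Real.log (p y / q y) :=
  calc (0 : ℝ) = ∑ y, (p y - q y) := by rw [Finset.sum_sub_distrib, hp.2, hq.2, sub_self]
    _ ≤ ∑ y, p y * Real.log (p y / q y) := Finset.sum_le_sum fun y _ => by
      by_cases hy : p y = 0
      · simp [hy, hq.1 y]
      · exact sub_le_mul_log_div (hp.1 y) ((hq.1 y).lt_of_ne' (hpq y hy))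

lemma sum_ofReal_mul_slog (hp : ∀ y, 0 ≤ p y) (hq : q ∈ stdSimplex ℝ 𝒴)
    (hpq : ∀ y, p y ≠ 0 → q y ≠ 0) :
    ∑ y, ENNReal.ofReal (p y) * slog q y = ENNReal.ofReal (∑ y, p y * -Real.log (q y)) := by
  have hterm : ∀ y, ENNReal.ofReal (p y) * slog q y = ENNReal.ofReal (p y * -Real.log (q y)) ∧
      0 ≤ p y * -Real.log (q y) := by
    intro y
    by_cases hy : p y = 0
    · simp [hy]
    · have hqy := hpq y hy
      exact ⟨by rw [slog, if_neg hqy, ENNReal.ofReal_mul (hp y)],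
        mul_nonneg (hp y) (neg_log_nonneg_of_mem_stdSimplex hq y)⟩
  rw [ENNReal.ofReal_sum_of_nonneg fun y _ => (hterm y).2]
  exact Finset.sum_congr rfl fun y _ => (hterm y).1

lemma sum_ofReal_mul_slog_eq_KLdiv_add (hp : p ∈ stdSimplex ℝ 𝒴) (hq : q ∈ stdSimplex ℝ 𝒴) :
    ∑ y, ENNReal.ofReal (p y) * slog q y
      = KLdiv p q + ∑ y, ENNReal.ofReal (p y) * slog p y := by
  by_cases h : ∃ y, p y ≠ 0 ∧ q y = 0
  · obtain ⟨y, hpy, hqy⟩ := h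
    rw [KLdiv, if_pos ⟨y, hpy, hqy⟩, top_add, ENNReal.sum_eq_top]
    refine ⟨y, Finset.mem_univ y, ?_⟩
    rw [slog, if_pos hqy, ENNReal.mul_top]
    exact ENNReal.ofReal_pos.2 ((hp.1 y).lt_of_ne' hpy) |>.ne'
  · replace h : ∀ y, p y ≠ 0 → q y ≠ 0 := fun y hpy hqy => h ⟨y, hpy, hqy⟩
    rw [KLdiv, if_neg (by simpa using h), sum_ofReal_mul_slog hp.1 hq h,
      sum_ofReal_mul_slog hp.1 hp fun _ => id,
      ← ENNReal.ofReal_add (sum_mul_log_div_nonneg hp hq h), ← Finset.sum_add_distrib]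
    · congr 1
      refine Finset.sum_congr rfl fun y _ => ?_
      by_cases hy : p y = 0
      · simp [hy]
      · rw [Real.log_div hy (h y hy)]; ring
    · exact Finset.sum_nonneg fun y _ => mul_nonneg (hp.1 y) (neg_log_nonneg_of_mem_stdSimplex hp y)

end Gibbs

lemma measurable_slog {𝒴 : Type*} : Measurable (slog : (𝒴 → ℝ) → 𝒴 → ℝ≥0∞) := by
  classical
  exact measurable_pi_iff.2 fun y =>
    Measurable.ite (measurableSet_eq_fun (measurable_pi_apply y) measurable_const)
      measurable_const (Real.measurable_log.comp (measurable_pi_apply y)).neg.ennreal_ofReal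

lemma measurable_KLdiv {𝒴 : Type*} [Fintype 𝒴] :
    Measurable fun pq : (𝒴 → ℝ) × (𝒴 → ℝ) => KLdiv pq.1 pq.2 := by
  classical
  refine Measurable.ite ?_ measurable_const (by fun_prop)
  simp only [Set.ofPred_exists]
  exact MeasurableSet.iUnion fun y => by measurability

/-- Unlike a conditional probability mass function proper, `ρ` need not be `m`-measurable. -/
def IsCondPMF {Ω 𝒴 : Type*} (m : MeasurableSpace Ω) [MeasurableSpace Ω] (P : Measure Ω)
    (Y : Ω → 𝒴) (ρ : Ω → 𝒴 → ℝ) : Prop :=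
  ∀ y s, MeasurableSet[m] s → P (s ∩ Y ⁻¹' {y}) = ∫⁻ ω in s, ENNReal.ofReal (ρ ω y) ∂P

section CondPMF

variable {Ω 𝒴 : Type*} {m : MeasurableSpace Ω} [mΩ : MeasurableSpace Ω] {P : Measure Ω}
  {Y : Ω → 𝒴} {ρ : Ω → 𝒴 → ℝ}

lemma IsCondPMF.of_generateFrom [IsFiniteMeasure P] {C : Set (Set Ω)} (hm : m ≤ mΩ)
    (hgen : m = .generateFrom C) (hC : IsPiSystem C)
    (hCρ : ∀ y, ∀ s ∈ C, P (s ∩ Y ⁻¹' {y}) = ∫⁻ ω in s, ENNReal.ofReal (ρ ω y) ∂P)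
    (huniv : ∀ y, P (Y ⁻¹' {y}) = ∫⁻ ω, ENNReal.ofReal (ρ ω y) ∂P) :
    IsCondPMF m P Y ρ := by
  intro y s hs
  have hext := ext_on_measurableSpace_of_generate_finite mΩ (μ := P.restrict (Y ⁻¹' {y}))
    (ν := P.withDensity fun ω => ENNReal.ofReal (ρ ω y)) C (fun t ht => ?_) hm hgen hC ?_ hs
  · rwa [Measure.restrict_apply (hm s hs), withDensity_apply _ (hm s hs)] at hext
  · have ht' : MeasurableSet t := hm t (hgen ▸ MeasurableSpace.measurableSet_generateFrom ht)
    rw [Measure.restrict_apply ht', withDensity_apply _ ht']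
    exact hCρ y t ht
  · rw [Measure.restrict_apply_univ, withDensity_apply _ MeasurableSet.univ, Measure.restrict_univ]
    exact huniv y

lemma IsCondPMF.setLIntegral_preimage_singleton (h : IsCondPMF m P Y ρ) (hm : m ≤ mΩ)
    (hρ : Measurable ρ) (y : 𝒴) {f : Ω → ℝ≥0∞} (hf : Measurable[m] f) :
    ∫⁻ ω in Y ⁻¹' {y}, f ω ∂P = ∫⁻ ω, ENNReal.ofReal (ρ ω y) * f ω ∂P := by
  have htrim : (P.restrict (Y ⁻¹' {y})).trim hm
      = (P.withDensity fun ω => ENNReal.ofReal (ρ ω y)).trim hm := by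
    refine @Measure.ext _ m _ _ fun s hs => ?_
    rw [trim_measurableSet_eq hm hs, trim_measurableSet_eq hm hs,
      Measure.restrict_apply (hm s hs), withDensity_apply _ (hm s hs)]
    exact h y s hs
  rw [← lintegral_trim hm hf, htrim, lintegral_trim hm hf,
    lintegral_withDensity_eq_lintegral_mul _ (by fun_prop) (hf.mono hm le_rfl)]
  rfl

lemma IsCondPMF.lintegral_comp [Fintype 𝒴] [MeasurableSpace 𝒴] [MeasurableSingletonClass 𝒴]
    (h : IsCondPMF m P Y ρ) (hm : m ≤ mΩ) (hρ : Measurable ρ) (hY : Measurable Y)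
    {F : Ω → 𝒴 → ℝ≥0∞} (hF : Measurable[m] F) :
    ∫⁻ ω, F ω (Y ω) ∂P = ∫⁻ ω, ∑ y, ENNReal.ofReal (ρ ω y) * F ω y ∂P := by
  classical
  have hF' : ∀ y, Measurable[m] fun ω => F ω y := fun y => (measurable_pi_apply y).comp hF
  have hterm : ∀ y, Measurable fun ω => ENNReal.ofReal (ρ ω y) * F ω y := fun y =>
    ((measurable_pi_apply y).comp hρ).ennreal_ofReal.mul ((hF' y).mono hm le_rfl)
  have hsplit : (fun ω => F ω (Y ω)) = fun ω => ∑ y, (Y ⁻¹' {y}).indicator (F · y) ω := by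
    ext ω
    simp [Set.indicator_apply]
  rw [hsplit, lintegral_finsetSum _ fun y _ =>
      ((hF' y).mono hm le_rfl).indicator (hY (measurableSet_singleton y)),
    lintegral_finsetSum _ fun y _ => hterm y]
  refine Finset.sum_congr rfl fun y _ => ?_
  rw [lintegral_indicator (hY (measurableSet_singleton y)),
    h.setLIntegral_preimage_singleton hm hρ y (hF' y)]

lemma IsCondPMF.lintegral_slog_eq_lintegral_KLdiv_add [Fintype 𝒴] [MeasurableSpace 𝒴]
    [MeasurableSingletonClass 𝒴] {q : Ω → 𝒴 → ℝ} (h : IsCondPMF m P Y ρ)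
    (hm : m ≤ mΩ) (hY : Measurable Y) (hρm : Measurable[m] ρ)
    (hρ : ∀ᵐ ω ∂P, ρ ω ∈ stdSimplex ℝ 𝒴) (hqm : Measurable[m] q)
    (hq : ∀ᵐ ω ∂P, q ω ∈ stdSimplex ℝ 𝒴) :
    ∫⁻ ω, slog (q ω) (Y ω) ∂P = ∫⁻ ω, KLdiv (ρ ω) (q ω) ∂P + ∫⁻ ω, slog (ρ ω) (Y ω) ∂P := by
  have hρ' : Measurable ρ := hρm.mono hm le_rfl
  have hKL : Measurable fun ω => KLdiv (ρ ω) (q ω) :=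
    measurable_KLdiv.comp (hρ'.prodMk (hqm.mono hm le_rfl))
  rw [h.lintegral_comp (F := fun ω => slog (q ω)) hm hρ' hY (measurable_slog.comp hqm),
    h.lintegral_comp (F := fun ω => slog (ρ ω)) hm hρ' hY (measurable_slog.comp hρm),
    ← lintegral_add_left hKL]
  refine lintegral_congr_ae ?_
  filter_upwards [hρ, hq] with ω hρω hqω
  exact sum_ofReal_mul_slog_eq_KLdiv_add hρω hqω

end CondPMF

lemma setIntegral_indicator_one_eq_measureReal {Ω : Type*} [MeasurableSpace Ω] {P : Measure Ω}
    {s t : Set Ω} (ht : MeasurableSet t) :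
    ∫ ω in s, t.indicator (fun _ => (1 : ℝ)) ω ∂P = P.real (s ∩ t) := by
  rw [integral_indicator_const _ ht, measureReal_restrict_apply ht, smul_eq_mul, mul_one,
    Set.inter_comm]

section Posterior

variable {Ω ℋ 𝒴 : Type*} [MeasurableSpace Ω] [mℋ : MeasurableSpace ℋ] {P : Measure Ω}
  {Y : Ω → 𝒴} {H : Ω → ℋ}

lemma measurable_posterior : Measurable[mℋ.comap H] (posterior mℋ P H Y) :=
  @measurable_pi_lambda _ _ _ (mℋ.comap H) _ _ fun _ =>
    (stronglyMeasurable_condExp (m := mℋ.comap H)).measurable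

lemma posterior_nonneg (y : 𝒴) : 0 ≤ᵐ[P] fun ω => posterior mℋ P H Y ω y :=
  condExp_nonneg (.of_forall fun _ => Set.indicator_nonneg (fun _ _ => zero_le_one) _)

lemma lintegral_ofReal_posterior (y : 𝒴) (s : Set Ω) :
    ∫⁻ ω in s, ENNReal.ofReal (posterior mℋ P H Y ω y) ∂P
      = ENNReal.ofReal (∫ ω in s, posterior mℋ P H Y ω y ∂P) :=
  (ofReal_integral_eq_lintegral_ofReal integrable_condExp.integrableOn
    (ae_restrict_of_ae (posterior_nonneg y))).symm

variable [MeasurableSpace 𝒴] [MeasurableSingletonClass 𝒴] [IsFiniteMeasure P]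

lemma posterior_mem_stdSimplex [Fintype 𝒴] (hY : Measurable Y) (hH : Measurable H) :
    ∀ᵐ ω ∂P, posterior mℋ P H Y ω ∈ stdSimplex ℝ 𝒴 := by
  classical
  have hnonneg : ∀ᵐ ω ∂P, ∀ y, 0 ≤ posterior mℋ P H Y ω y :=
    ae_all_iff.2 posterior_nonneg
  have hindicator : ∑ y, (Y ⁻¹' {y}).indicator (fun _ => (1 : ℝ)) = fun _ => 1 := by
    ext ω
    simp [Finset.sum_apply, Set.indicator_apply]
  have hsum : ∑ y, (fun ω => posterior mℋ P H Y ω y) =ᵐ[P] fun _ => 1 := by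
    refine (condExp_finsetSum (fun y _ => (integrable_const (1 : ℝ)).indicator
      (hY (measurableSet_singleton y))) _).symm.trans ?_
    rw [hindicator, condExp_const hH.comap_le]
  filter_upwards [hnonneg, hsum] with ω h0 h1
  exact ⟨h0, by simpa using h1⟩

lemma setIntegral_posterior (hY : Measurable Y) (hH : Measurable H) (y : 𝒴) {s : Set Ω}
    (hs : MeasurableSet[mℋ.comap H] s) :
    ∫ ω in s, posterior mℋ P H Y ω y ∂P = P.real (s ∩ Y ⁻¹' {y}) := by
  change ∫ ω in s, (P⟦Y ⁻¹' {y} | mℋ.comap H⟧) ω ∂P = _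
  rw [setIntegral_condExp hH.comap_le
      ((integrable_const 1).indicator (hY (measurableSet_singleton y))) hs,
    setIntegral_indicator_one_eq_measureReal (hY (measurableSet_singleton y))]

lemma isCondPMF_posterior (hY : Measurable Y) (hH : Measurable H) :
    IsCondPMF (mℋ.comap H) P Y (posterior mℋ P H Y) := fun y _ hs => by
  rw [lintegral_ofReal_posterior, setIntegral_posterior hY hH y hs, ofReal_measureReal]

variable [StandardBorelSpace Ω] {𝒵 : Type*} [m𝒵 : MeasurableSpace 𝒵] {ζ : Ω → 𝒵}

lemma setIntegral_posterior_inter_of_condIndepFun (hY : Measurable Y) (hH : Measurable H)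
    (hζ : Measurable ζ) (hindep : CondIndepFun (mℋ.comap H) hH.comap_le ζ Y P) (y : 𝒴)
    {A : Set ℋ} {B : Set 𝒵} (hA : MeasurableSet A) (hB : MeasurableSet B) :
    ∫ ω in H ⁻¹' A ∩ ζ ⁻¹' B, posterior mℋ P H Y ω y ∂P
      = P.real (H ⁻¹' A ∩ ζ ⁻¹' B ∩ Y ⁻¹' {y}) := by
  set ρ := fun ω => posterior mℋ P H Y ω y
  set χB := (ζ ⁻¹' B).indicator fun _ => (1 : ℝ)
  have hHA : MeasurableSet[mℋ.comap H] (H ⁻¹' A) := ⟨A, hA, rfl⟩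
  have hYy : MeasurableSet (Y ⁻¹' {y}) := hY (measurableSet_singleton y)
  have hχB : Integrable χB P := (integrable_const 1).indicator (hζ hB)
  have hρB : (ζ ⁻¹' B).indicator ρ = ρ * χB := by
    ext ω
    by_cases hω : ω ∈ ζ ⁻¹' B <;> simp [χB, hω]
  have hint : Integrable (ρ * χB) P := hρB ▸ integrable_condExp.indicator (hζ hB)
  calc ∫ ω in H ⁻¹' A ∩ ζ ⁻¹' B, ρ ω ∂P
      = ∫ ω in H ⁻¹' A, (ρ * χB) ω ∂P := by rw [← hρB, setIntegral_indicator (hζ hB)]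
    _ = ∫ ω in H ⁻¹' A, (P[ρ * χB | mℋ.comap H]) ω ∂P :=
      (setIntegral_condExp hH.comap_le hint hHA).symm
    _ = ∫ ω in H ⁻¹' A, (P⟦ζ ⁻¹' B ∩ Y ⁻¹' {y} | mℋ.comap H⟧) ω ∂P := by
      refine setIntegral_congr_ae (hH hA) ?_
      filter_upwards [condExp_mul_of_stronglyMeasurable_left stronglyMeasurable_condExp hint hχB,
        (condIndepFun_iff_condExp_inter_preimage_eq_mul hζ hY).1 hindep B {y} hB
          (measurableSet_singleton y)] with ω hpull hindepω _
      rw [hindepω]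
      exact hpull.trans (mul_comm _ _)
    _ = P.real (H ⁻¹' A ∩ ζ ⁻¹' B ∩ Y ⁻¹' {y}) := by
      rw [setIntegral_condExp hH.comap_le ((integrable_const 1).indicator ((hζ hB).inter hYy)) hHA,
        setIntegral_indicator_one_eq_measureReal ((hζ hB).inter hYy), Set.inter_assoc]

lemma isCondPMF_posterior_of_condIndepFun (hY : Measurable Y) (hH : Measurable H)
    (hζ : Measurable ζ) (hindep : CondIndepFun (mℋ.comap H) hH.comap_le ζ Y P) :
    IsCondPMF ((mℋ.prod m𝒵).comap fun ω => (H ω, ζ ω)) P Y (posterior mℋ P H Y) := by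
  refine .of_generateFrom (hH.prodMk hζ).comap_le ?_
    (isPiSystem_prod.comap fun ω => (H ω, ζ ω)) ?_ fun y => ?_
  · rw [show mℋ.prod m𝒵 = _ from generateFrom_prod.symm, MeasurableSpace.comap_generateFrom]
    rfl
  · rintro y _ ⟨_, ⟨A, hA, B, hB, rfl⟩, rfl⟩
    rw [Set.mk_preimage_prod, lintegral_ofReal_posterior,
      setIntegral_posterior_inter_of_condIndepFun hY hH hζ hindep y hA hB, ofReal_measureReal]
  · simpa using isCondPMF_posterior hY hH y Set.univ MeasurableSet.univ

end Posterior

lemma MeasurableSpace.le_univCompletion {α : Type*} (m : MeasurableSpace α) :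
    m ≤ m.univCompletion :=
  fun _ hs _ _ => hs.nullMeasurableSet

section BayesRisk

variable {Ω 𝒳 𝒴 : Type*} [MeasurableSpace Ω] [m𝒳 : MeasurableSpace 𝒳] [Fintype 𝒴]
  [MeasurableSpace 𝒴] [DiscreteMeasurableSpace 𝒴] {P : Measure Ω} [IsProbabilityMeasure P]
  {Y : Ω → 𝒴} {X : Ω → 𝒳}

lemma exists_measurable_stdSimplex_posterior_ae_eq (hY : Measurable Y) (hX : Measurable X) :
    ∃ q : 𝒳 → 𝒴 → ℝ, Measurable q ∧ (∀ x, q x ∈ stdSimplex ℝ 𝒴) ∧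
      ∀ᵐ ω ∂P, q (X ω) = posterior m𝒳 P X Y ω := by
  have : Nonempty 𝒴 := (nonempty_of_isProbabilityMeasure P).map Y
  have : StandardBorelSpace 𝒴 := standardBorelSpace_of_discreteMeasurableSpace
  refine ⟨fun x y => (condDistrib Y X P x).real {y},
    measurable_pi_lambda _ fun y =>
      (Kernel.measurable_coe _ (measurableSet_singleton y)).ennreal_toReal,
    fun x => ⟨fun y => measureReal_nonneg, by simp⟩, ?_⟩
  filter_upwards [ae_all_iff.2 fun y =>
    condDistrib_ae_eq_condExp (μ := P) hX hY (measurableSet_singleton y)] with ω hω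
  exact funext hω

lemma lintegral_slog_posterior_le (hY : Measurable Y) (hX : Measurable X) {q : 𝒳 → 𝒴 → ℝ}
    (hqm : Measurable[m𝒳.univCompletion] q) (hq : ∀ x, q x ∈ stdSimplex ℝ 𝒴) :
    ∫⁻ ω, slog (posterior m𝒳 P X Y ω) (Y ω) ∂P ≤ ∫⁻ ω, slog (q (X ω)) (Y ω) ∂P := by
  have hq' : AEMeasurable q (P.map X) :=
    NullMeasurable.aemeasurable fun _ hs => hqm hs _ inferInstance
  have hqX : ∀ᵐ ω ∂P, q (X ω) = hq'.mk q (X ω) := ae_of_ae_map hX.aemeasurable hq'.ae_eq_mk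
  calc ∫⁻ ω, slog (posterior m𝒳 P X Y ω) (Y ω) ∂P
      ≤ ∫⁻ ω, KLdiv (posterior m𝒳 P X Y ω) (hq'.mk q (X ω)) ∂P
          + ∫⁻ ω, slog (posterior m𝒳 P X Y ω) (Y ω) ∂P := le_add_self
    _ = ∫⁻ ω, slog (hq'.mk q (X ω)) (Y ω) ∂P :=
      ((isCondPMF_posterior hY hX).lintegral_slog_eq_lintegral_KLdiv_add hX.comap_le hY
        measurable_posterior (posterior_mem_stdSimplex hY hX)
        (hq'.measurable_mk.comp (comap_measurable X))
        (hqX.mono fun ω h => (h ▸ hq (X ω) : hq'.mk q (X ω) ∈ stdSimplex ℝ 𝒴))).symm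
    _ = ∫⁻ ω, slog (q (X ω)) (Y ω) ∂P :=
      lintegral_congr_ae (hqX.mono fun ω h => congrArg (slog · (Y ω)) h.symm)

lemma reportRisk_slog_eq (hY : Measurable Y) (hX : Measurable X) :
    ReportRisk m𝒳 P X Y slog = ∫⁻ ω, slog (posterior m𝒳 P X Y ω) (Y ω) ∂P := by
  refine le_antisymm ?_ (le_iInf fun q => lintegral_slog_posterior_le hY hX q.2.1 q.2.2)
  obtain ⟨q, hqm, hq, hqX⟩ := exists_measurable_stdSimplex_posterior_ae_eq (P := P) hY hX
  calc ReportRisk m𝒳 P X Y slog ≤ ∫⁻ ω, slog (q (X ω)) (Y ω) ∂P :=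
        iInf_le_of_le ⟨q, hqm.mono m𝒳.le_univCompletion le_rfl, hq⟩ le_rfl
    _ = ∫⁻ ω, slog (posterior m𝒳 P X Y ω) (Y ω) ∂P :=
        lintegral_congr_ae (hqX.mono fun ω h => congrArg (slog · (Y ω)) h)

end BayesRisk

theorem log_loss_gap_eq_expected_KL_general
    {Ω ℋ ℳ 𝒵 𝒴 : Type*}
    [MeasurableSpace Ω] [StandardBorelSpace Ω]
    [mℋ : MeasurableSpace ℋ]
    [mℳ : MeasurableSpace ℳ]
    [MeasurableSpace 𝒵]
    [Fintype 𝒴] [MeasurableSpace 𝒴] [DiscreteMeasurableSpace 𝒴]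
    (P : Measure Ω) [IsProbabilityMeasure P]
    (Y : Ω → 𝒴) (hY : Measurable Y)
    (H : Ω → ℋ) (hH : Measurable H)
    (ζ : Ω → 𝒵) (hζ : Measurable ζ)
    (g : ℋ × 𝒵 → ℳ) (hg : Measurable g)
    (M : Ω → ℳ) (hM : M = fun ω => g (H ω, ζ ω))
    (hindep : CondIndepFun (MeasurableSpace.comap H mℋ) hH.comap_le ζ Y P)
    (hHfin : ∫⁻ ω, slog (posterior mℋ P H Y ω) (Y ω) ∂P ≠ ⊤) :
    ReportRisk mℳ P M Y slog - ReportRisk mℋ P H Y slog =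
      ∫⁻ ω, KLdiv (posterior mℋ P H Y ω) (posterior mℳ P M Y ω) ∂P := by
  have hHζ : Measurable fun ω => (H ω, ζ ω) := hH.prodMk hζ
  have hσH : mℋ.comap H ≤ (mℋ.prod ‹_›).comap fun ω => (H ω, ζ ω) := by
    rw [MeasurableSpace.comap_prodMk]
    exact le_sup_left
  have hMHζ : Measurable[(mℋ.prod ‹_›).comap fun ω => (H ω, ζ ω)] M :=
    hM ▸ hg.comp (comap_measurable _)
  have hMm : Measurable M := hMHζ.mono hHζ.comap_le le_rfl
  rw [reportRisk_slog_eq hY hMm, reportRisk_slog_eq hY hH,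
    (isCondPMF_posterior_of_condIndepFun hY hH hζ hindep).lintegral_slog_eq_lintegral_KLdiv_add
      hHζ.comap_le hY (measurable_posterior.mono hσH le_rfl) (posterior_mem_stdSimplex hY hH)
      (measurable_posterior.mono hMHζ.comap_le le_rfl) (posterior_mem_stdSimplex hY hMm),
    ENNReal.add_sub_cancel_right hHfin]

/-- log-loss communication gap as expected KL divergence. Assume `𝒴` finite
and `M = g(H, ζ)` with `ζ` conditionally independent of `Y` given `H`, with finite expected
log scores at the posteriors. Then `V(M; s_log) − V(H; s_log) = E[KL(π_H ‖ π_M)]`. -/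
theorem log_loss_gap_eq_expected_KL
    {Ω ℋ ℳ 𝒵 𝒴 : Type*}
    [MeasurableSpace Ω] [StandardBorelSpace Ω] [Nonempty Ω]
    [mℋ : MeasurableSpace ℋ] [StandardBorelSpace ℋ]
    [mℳ : MeasurableSpace ℳ] [StandardBorelSpace ℳ]
    [MeasurableSpace 𝒵]
    [Fintype 𝒴] [MeasurableSpace 𝒴] [DiscreteMeasurableSpace 𝒴]
    (P : Measure Ω) [IsProbabilityMeasure P]
    (Y : Ω → 𝒴) (hY : Measurable Y)
    (H : Ω → ℋ) (hH : Measurable H)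
    (ζ : Ω → 𝒵) (hζ : Measurable ζ)
    (g : ℋ × 𝒵 → ℳ) (hg : Measurable g)
    (M : Ω → ℳ) (hM : M = fun ω => g (H ω, ζ ω))
    (hindep : CondIndepFun (MeasurableSpace.comap H mℋ) hH.comap_le ζ Y P)
    (hHfin : ∫⁻ ω, slog (posterior mℋ P H Y ω) (Y ω) ∂P ≠ ⊤)
    (hMfin : ∫⁻ ω, slog (posterior mℳ P M Y ω) (Y ω) ∂P ≠ ⊤) :
    ReportRisk mℳ P M Y slog - ReportRisk mℋ P H Y slog =
      ∫⁻ ω, KLdiv (posterior mℋ P H Y ω) (posterior mℳ P M Y ω) ∂P :=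
  log_loss_gap_eq_expected_KL_general (mℋ := mℋ) (mℳ := mℳ) P Y hY H hH ζ hζ g hg M hM hindep hHfin
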